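/- The centre of Γ_p = T^{p-1} ⋊_ρ C_p is the cyclic subgroup of order p generated by the element (ξ_p, ξ_p^2, ..., ξ_p^{p-1}) ∈ T^{p-1}, where ξ_p = e^{2πi/p}. -/
import Mathlib

open Real in
/-- The centre of `Γ_p = T^{p-1} ⋊_ρ C_p` is the cyclic subgroup of order `p`
generated by the element `(ξ_p, ξ_p², …, ξ_p^{p-1}) ∈ T^{p-1}`, where `ξ_p = e^{2πi/p}`
(realised as `Circle.exp (2π/p)`).  Here the generator `a` of `C_p = Multiplicative (ZMod p)`
acts on `T^{p-1} = Fin (p-1) → Circle` by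
`ρ(a)(t_1, …, t_{p-1}) = (t_{p-1}⁻¹, t_1 t_{p-1}⁻¹, …, t_{p-2} t_{p-1}⁻¹)`. -/
theorem stmt_4 (p : ℕ) (hp : p.Prime)
    (φ : Multiplicative (ZMod p) →* MulAut (Fin (p - 1) → Circle))
    (hφ : ∀ (t : Fin (p - 1) → Circle) (i : Fin (p - 1)),
      φ (Multiplicative.ofAdd (1 : ZMod p)) t i =
        if (i : ℕ) = 0 then (t ⟨p - 2, by have := i.isLt; omega⟩)⁻¹
        else t ⟨(i : ℕ) - 1, by have := i.isLt; omega⟩ * (t ⟨p - 2, by have := i.isLt; omega⟩)⁻¹)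
    (z : SemidirectProduct (Fin (p - 1) → Circle) (Multiplicative (ZMod p)) φ)
    (hz : z = ⟨fun i => (Circle.exp (2 * π / p)) ^ ((i : ℕ) + 1), 1⟩) :
    Subgroup.center (SemidirectProduct (Fin (p - 1) → Circle) (Multiplicative (ZMod p)) φ) =
      Subgroup.zpowers z ∧ orderOf z = p := by
  haveI : Fact p.Prime := ⟨hp⟩
  haveI : NeZero p := ⟨hp.ne_zero⟩
  have hp2 : 2 ≤ p := hp.two_le
  have hplt : 0 < p - 1 := by omega
  set ξ : Circle := Circle.exp (2 * π / p) with hξdef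
  set w : Fin (p - 1) → Circle := fun i => ξ ^ ((i : ℕ) + 1) with hwdef
  -- coercion of powers on the circle
  have coe_pow : ∀ (c : Circle) (n : ℕ), ((c ^ n : Circle) : ℂ) = (c : ℂ) ^ n := by
    intro c n
    induction n with
    | zero => simp
    | succ n ih => rw [pow_succ, pow_succ, Circle.coe_mul, ih]
  -- the complex primitive root
  have hζ : IsPrimitiveRoot (Complex.exp (2 * π * Complex.I / p)) p :=
    Complex.isPrimitiveRoot_exp p hp.ne_zero
  have hcoe : (ξ : ℂ) = Complex.exp (2 * π * Complex.I / p) := by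
    rw [hξdef, Circle.coe_exp]
    congr 1
    have : (p : ℂ) ≠ 0 := by exact_mod_cast hp.ne_zero
    push_cast
    field_simp
  have hξp : ξ ^ p = 1 := by
    apply Circle.ext
    rw [coe_pow, hcoe, Circle.coe_one]
    exact hζ.pow_eq_one
  have hξ1 : ξ ≠ 1 := by
    intro h
    exact hζ.ne_one hp.one_lt (by rw [← hcoe, h, Circle.coe_one])
  have hpinv : (ξ ^ (p - 1))⁻¹ = ξ := by
    apply inv_eq_of_mul_eq_one_right
    rw [← pow_succ]
    have : p - 1 + 1 = p := by omega
    rw [this, hξp]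
  -- fixed-point iteration lemma
  have fixpow : ∀ (f : MulAut (Fin (p - 1) → Circle)) (t : Fin (p - 1) → Circle),
      f t = t → ∀ n : ℕ, (f ^ n) t = t := by
    intro f t h n
    induction n with
    | zero => rfl
    | succ n ih => rw [pow_succ, MulAut.mul_apply, h, ih]
  -- w is fixed by the generator
  have hwlast : w ⟨p - 2, by omega⟩ = ξ ^ (p - 1) := by
    show ξ ^ (p - 2 + 1) = ξ ^ (p - 1)
    congr 1
    omega
  have hfix : φ (Multiplicative.ofAdd (1 : ZMod p)) w = w := by
    funext i
    rw [hφ]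
    by_cases h0 : (i : ℕ) = 0
    · rw [if_pos h0, hwlast, hpinv]
      show ξ = ξ ^ ((i : ℕ) + 1)
      rw [h0, pow_one]
    · rw [if_neg h0, hwlast, hpinv]
      show ξ ^ ((i : ℕ) - 1 + 1) * ξ = ξ ^ ((i : ℕ) + 1)
      have h1 : (i : ℕ) - 1 + 1 = (i : ℕ) := by omega
      rw [h1, ← pow_succ]
  -- w is fixed by the whole group
  have hfixall : ∀ g : Multiplicative (ZMod p), φ g w = w := by
    intro g
    have hg : g = (Multiplicative.ofAdd (1 : ZMod p)) ^ (Multiplicative.toAdd g).val := by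
      rw [← ofAdd_nsmul, nsmul_eq_mul, mul_one, ZMod.natCast_val, ZMod.cast_id, ofAdd_toAdd]
    rw [hg, map_pow]
    exact fixpow _ _ hfix _
  -- faithfulness: if φ g fixes everything then g = 1
  have hker : ∀ g : Multiplicative (ZMod p), (∀ s, φ g s = s) → g = 1 := by
    intro g hg
    by_contra hg1
    have hx : Multiplicative.toAdd g ≠ 0 := by
      intro h
      exact hg1 (by rw [← ofAdd_toAdd g, h, ofAdd_zero])
    have hone : Multiplicative.ofAdd (1 : ZMod p) = g ^ ((Multiplicative.toAdd g)⁻¹).val := by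
      have h1 : Multiplicative.toAdd (g ^ ((Multiplicative.toAdd g)⁻¹).val) = 1 := by
        rw [toAdd_pow, nsmul_eq_mul, ZMod.natCast_val, ZMod.cast_id, inv_mul_cancel₀ hx]
      rw [← ofAdd_toAdd (g ^ ((Multiplicative.toAdd g)⁻¹).val), h1]
    have hImem : Complex.I ∈ Submonoid.unitSphere ℂ := by
      show Complex.I ∈ Metric.sphere (0 : ℂ) 1
      rw [mem_sphere_zero_iff_norm]; simp
    set c0 : Circle := ⟨Complex.I, hImem⟩ with hc0
    have hφ1 : φ (Multiplicative.ofAdd (1 : ZMod p)) (fun _ => c0) = (fun _ => c0) := by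
      rw [hone, map_pow]
      exact fixpow _ _ (hg _) _
    have h0 := congrFun hφ1 ⟨0, hplt⟩
    rw [hφ] at h0
    rw [if_pos rfl] at h0
    have : (c0 : ℂ)⁻¹ = (c0 : ℂ) := by
      rw [← Circle.coe_inv, h0]
    rw [hc0] at this
    simp only [Complex.inv_I] at this
    have : Complex.I = 0 := by linear_combination (-1/2 : ℂ) * this
    exact Complex.I_ne_zero this
  -- z is central
  have hzin : z = SemidirectProduct.inl w := by
    rw [hz]
    exact SemidirectProduct.ext rfl rfl
  have hzc : z ∈ Subgroup.center
      (SemidirectProduct (Fin (p - 1) → Circle) (Multiplicative (ZMod p)) φ) := by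
    rw [Subgroup.mem_center_iff]
    intro y
    apply SemidirectProduct.ext
    · rw [SemidirectProduct.mul_left, SemidirectProduct.mul_left, hzin]
      simp only [SemidirectProduct.left_inl, SemidirectProduct.right_inl, map_one]
      rw [hfixall y.right]
      show y.left * w = w * (MulEquiv.refl _) y.left
      rw [MulEquiv.refl_apply, mul_comm]
    · rw [SemidirectProduct.mul_right, SemidirectProduct.mul_right, hzin]
      simp [SemidirectProduct.right_inl]
  constructor
  · -- the centre is exactly the powers of z
    apply le_antisymm
    · intro x hx
      have hxc := Subgroup.mem_center_iff.mp hx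
      -- the ZMod p component is trivial
      have hright : x.right = 1 := by
        apply hker
        intro s
        have hl := congrArg SemidirectProduct.left (hxc (SemidirectProduct.inl s))
        simp only [SemidirectProduct.mul_left, SemidirectProduct.left_inl,
          SemidirectProduct.right_inl, map_one, MulAut.one_apply] at hl
        rw [mul_comm s x.left] at hl
        exact (mul_left_cancel hl).symm
      -- the torus component is fixed
      have hleft : φ (Multiplicative.ofAdd (1 : ZMod p)) x.left = x.left := by
        have hl := congrArg SemidirectProduct.left
          (hxc (SemidirectProduct.inr (Multiplicative.ofAdd (1 : ZMod p))))
        simp only [SemidirectProduct.mul_left, SemidirectProduct.left_inr,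
          SemidirectProduct.right_inr, hright, map_one, MulAut.one_apply, one_mul,
          mul_one] at hl
        exact hl
      set c : Circle := x.left ⟨0, hplt⟩ with hcdef
      have key : ∀ i : Fin (p - 1),
          φ (Multiplicative.ofAdd (1 : ZMod p)) x.left i = x.left i :=
        fun i => congrFun hleft i
      have k0 := key ⟨0, hplt⟩
      rw [hφ, if_pos rfl] at k0
      have hlastc : x.left ⟨p - 2, by omega⟩ = c⁻¹ := by
        rw [hcdef, ← k0, inv_inv]
      have claim : ∀ j (hj : j < p - 1), x.left ⟨j, hj⟩ = c ^ (j + 1) := by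
        intro j
        induction j with
        | zero => intro hj; rw [pow_one]
        | succ j ih =>
          intro hj
          have kj := key ⟨j + 1, hj⟩
          rw [hφ, if_neg (by simp)] at kj
          rw [← kj]
          show x.left ⟨j + 1 - 1, _⟩ * (x.left ⟨p - 2, _⟩)⁻¹ = c ^ (j + 1 + 1)
          have hj' : j < p - 1 := by omega
          have : x.left ⟨j + 1 - 1, by omega⟩ = c ^ (j + 1) := ih hj'
          rw [this, hlastc, inv_inv, ← pow_succ]
      have hcp : c ^ p = 1 := by
        have h1 : x.left ⟨p - 2, by omega⟩ = c ^ (p - 1) := by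
          rw [claim (p - 2) (by omega)]
          congr 1
          omega
        have h2 : c ^ (p - 1) = c⁻¹ := by rw [← h1, hlastc]
        have h3 : c ^ (p - 1) * c = 1 := by rw [h2, inv_mul_cancel]
        rw [← pow_succ] at h3
        have : p - 1 + 1 = p := by omega
        rwa [this] at h3
      -- identify c as a power of ξ
      obtain ⟨k, hk, hζk⟩ := hζ.eq_pow_of_pow_eq_one
        (ξ := (c : ℂ)) (by rw [← coe_pow, hcp, Circle.coe_one])
      have hcξ : c = ξ ^ k := by
        apply Circle.ext
        rw [coe_pow, hcoe, hζk]
      refine ⟨(k : ℤ), ?_⟩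
      show z ^ (k : ℤ) = x
      rw [zpow_natCast, hzin, ← map_pow]
      apply SemidirectProduct.ext
      · rw [SemidirectProduct.left_inl]
        funext i
        rw [Pi.pow_apply]
        show (ξ ^ ((i : ℕ) + 1)) ^ k = x.left i
        have : x.left i = c ^ ((i : ℕ) + 1) := by
          have := claim (i : ℕ) i.isLt
          rwa [Fin.eta] at this
        rw [this, hcξ, pow_right_comm]
      · rw [SemidirectProduct.right_inl, hright]
    · exact Subgroup.zpowers_le.mpr hzc
  · -- order of z is p
    have hwp : w ^ p = 1 := by
      funext i
      rw [Pi.pow_apply]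
      show (ξ ^ ((i : ℕ) + 1)) ^ p = (1 : Fin (p - 1) → Circle) i
      rw [pow_right_comm, hξp, one_pow]
      rfl
    have hzp : z ^ p = 1 := by
      rw [hzin, ← map_pow, hwp, map_one]
    have hzne : z ≠ 1 := by
      intro h
      have h0 := congrFun (congrArg SemidirectProduct.left h) ⟨0, hplt⟩
      rw [hzin, SemidirectProduct.left_inl, SemidirectProduct.one_left] at h0
      apply hξ1
      have : ξ ^ (0 + 1) = 1 := h0
      rwa [zero_add, pow_one] at this
    have hdvd : orderOf z ∣ p := orderOf_dvd_of_pow_eq_one hzp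
    rcases hp.eq_one_or_self_of_dvd _ hdvd with h | h
    · exact absurd (orderOf_eq_one_iff.mp h) hzne
    · exact h
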